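/- In the setting where Φ_p = 1+x+⋯+x^{p−1} is irreducible over F_2 and d = p−1: for the square-and-add walk on F_2[x]/(Φ_p) with basis {1,x,...,x^{d−1}}, the Fourier transform of the distribution Q_d after d steps satisfies: if |β| is even and β_0 = 0 then Q̂_d(β) = (1−|β|/d)^{d−|β|}(1−(|β|−1)/d)^{|β|}; if |β| is odd and β_0 = 0 then Q̂_d(β) = (1−|β|/d)^{|β|+1}(1−(|β|+1)/d)^{d−|β|−1}; if |β| is even and β_0 = 1 then Q̂_d(β) = (1−|β|/d)^{d−|β|+1}(1−(|β|−1)/d)^{|β|−1}; if |β| is odd and β_0 = 1 then Q̂_d(β) = (1−|β|/d)^{|β|}(1−(|β|+1)/d)^{d−|β|}. -/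

import Mathlib

open Polynomial Finset Matrix

/-- Fourier transform of a function on `(F_2)^d`. -/
noncomputable def ft (d : ℕ) (Q : (Fin d → ZMod 2) → ℝ) (β : Fin d → ZMod 2) : ℝ :=
  ∑ α : Fin d → ZMod 2, Q α * (-1 : ℝ) ^ (∑ i, (α i * β i).val)

/-- Hamming weight of a vector in `(F_2)^d`. -/
def wt (d : ℕ) (β : Fin d → ZMod 2) : ℕ :=
  (univ.filter fun i => β i ≠ 0).card

/-- The step distribution: `0` with probability `1/2`, each standard basis
vector with probability `1/(2d)`. -/
noncomputable def stepQ (d : ℕ) (α : Fin d → ZMod 2) : ℝ :=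
  if α = 0 then 1 / 2 else if ∃ i, α = Pi.single i 1 then 1 / (2 * d) else 0

/-- Distribution after `n` steps of the chain `X₀ = 0`, `Xₙ = A Xₙ₋₁ + εₙ`,
with the `εₙ` i.i.d. with distribution `Q`. -/
noncomputable def chainDist (d : ℕ) (A : Matrix (Fin d) (Fin d) (ZMod 2))
    (Q : (Fin d → ZMod 2) → ℝ) : ℕ → (Fin d → ZMod 2) → ℝ
  | 0 => fun α => if α = 0 then 1 else 0
  | n + 1 => fun α => ∑ γ : Fin d → ZMod 2, chainDist d A Q n γ * Q (α + A.mulVec γ)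

/-!
Fourier transform turns the chain into a product: since `Xₙ = A Xₙ₋₁ + εₙ`, one gets
`Q̂ₙ(β) = ∏_{j<n} Q̂((Aᵀ)ʲ β)`, and `Q̂(β) = 1 - |β|/d` for the step distribution.

To compute the weights `|(Aᵀ)ʲ β|`, read `β` as the linear form on `F₂[x]/(Φ_p)` with value `β_i`
at `x^i`, and record its values `s(m)` at all the `p`-th roots of unity `x^m`, `m ∈ ZMod p`; the
one extra value is `s(-1) = Σ βᵢ`, because `x^(p-1) = 1 + x + ⋯ + x^(p-2)`. Applying `Aᵀ` turns
`s` into `m ↦ s(2m)`, so `|(Aᵀ)ʲ β| = |T \ {-2ʲ}|` where `T` is the support of `s`. Irreducibility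
of `Φ_p` means that `2` is a primitive root mod `p`, so for `j < d` the points `-2ʲ` run over the
nonzero residues, and `Q̂_d(β) = ∏_{m ≠ 0} (1 - |T \ {m}|/d)`. Finally `|T| = |β| + [|β| odd]` and
`0 ∈ T` iff `β₀ = 1`.
-/

noncomputable def signChar : AddChar (ZMod 2) ℝ :=
  AddChar.zmodChar 2 (ζ := (-1 : ℝ)) (by norm_num)

lemma signChar_apply (a : ZMod 2) : signChar a = (-1) ^ a.val := rfl

lemma signChar_eq_one_sub (a : ZMod 2) : signChar a = 1 - 2 * if a ≠ 0 then 1 else 0 := by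
  obtain rfl | rfl : a = 0 ∨ a = 1 := by revert a; decide
  · simp
  · norm_num [signChar_apply, ZMod.val_one]

lemma ft_eq_sum_signChar {d : ℕ} (Q : (Fin d → ZMod 2) → ℝ) (β : Fin d → ZMod 2) :
    ft d Q β = ∑ α, Q α * signChar (α ⬝ᵥ β) := by
  refine sum_congr rfl fun α _ => ?_
  have hval : (α ⬝ᵥ β).val = (∑ i, (α i * β i).val) % 2 := by
    rw [← ZMod.val_natCast, Nat.cast_sum]
    simp [dotProduct]
  rw [signChar_apply, hval, ← neg_one_pow_eq_pow_mod_two]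

lemma signChar_mulVec_dotProduct {d : ℕ} (A : Matrix (Fin d) (Fin d) (ZMod 2))
    (γ β : Fin d → ZMod 2) : signChar (A *ᵥ γ ⬝ᵥ β) = signChar (γ ⬝ᵥ Aᵀ *ᵥ β) := by
  rw [dotProduct_mulVec, vecMul_transpose, dotProduct_comm]

section chainDist

variable {d : ℕ} (A : Matrix (Fin d) (Fin d) (ZMod 2)) (Q : (Fin d → ZMod 2) → ℝ)

lemma ft_chainDist_zero (β : Fin d → ZMod 2) : ft d (chainDist d A Q 0) β = 1 := by
  simp [ft_eq_sum_signChar, chainDist]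

lemma sum_shift_mul_signChar (v β : Fin d → ZMod 2) :
    ∑ α, Q (α + v) * signChar (α ⬝ᵥ β) = signChar (v ⬝ᵥ β) * ∑ α, Q α * signChar (α ⬝ᵥ β) := by
  rw [mul_sum, ← Equiv.sum_comp (Equiv.addRight v)]
  refine sum_congr rfl fun α _ => ?_
  have hvv : v + v = 0 := by ext; exact CharTwo.add_self_eq_zero _
  simp only [Equiv.coe_addRight, add_assoc, hvv, add_zero, add_dotProduct, AddChar.map_add_eq_mul]
  ring

lemma ft_chainDist_succ (n : ℕ) (β : Fin d → ZMod 2) :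
    ft d (chainDist d A Q (n + 1)) β = ft d Q β * ft d (chainDist d A Q n) (Aᵀ *ᵥ β) := by
  set P := chainDist d A Q n
  calc ft d (chainDist d A Q (n + 1)) β
      = ∑ α, (∑ γ, P γ * Q (α + A *ᵥ γ)) * signChar (α ⬝ᵥ β) := ft_eq_sum_signChar _ β
    _ = ∑ γ, P γ * ∑ α, Q (α + A *ᵥ γ) * signChar (α ⬝ᵥ β) := by
      simp only [sum_mul, mul_sum, mul_assoc]
      exact sum_comm
    _ = ∑ γ, P γ * (signChar (γ ⬝ᵥ Aᵀ *ᵥ β) * ft d Q β) := by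
      simp only [sum_shift_mul_signChar, signChar_mulVec_dotProduct, ft_eq_sum_signChar]
    _ = ft d Q β * ft d P (Aᵀ *ᵥ β) := by
      rw [ft_eq_sum_signChar P, mul_sum]
      exact sum_congr rfl fun γ _ => by ring

lemma ft_chainDist (n : ℕ) (β : Fin d → ZMod 2) :
    ft d (chainDist d A Q n) β = ∏ j ∈ range n, ft d Q ((Aᵀ ^ j) *ᵥ β) := by
  induction n generalizing β with
  | zero => exact ft_chainDist_zero A Q β
  | succ n ih =>
    rw [ft_chainDist_succ, ih, prod_range_succ', pow_zero, one_mulVec, mul_comm]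
    simp only [pow_succ, mulVec_mulVec]

end chainDist

lemma stepQ_eq (d : ℕ) : stepQ d = fun α =>
    (if α = 0 then 1 / 2 else 0) + ∑ i, if α = Pi.single i 1 then 1 / (2 * d : ℝ) else 0 := by
  have hinj : Function.Injective fun i : Fin d => (Pi.single i 1 : Fin d → ZMod 2) :=
    fun i j h => by simpa [Pi.single_apply] using congrFun h i
  ext α
  by_cases h0 : α = 0
  · subst h0
    have : ∀ i : Fin d, (0 : Fin d → ZMod 2) ≠ Pi.single i 1 := fun i h => by
      simpa using congrFun h i
    simp [stepQ, this]
  by_cases hs : ∃ i, α = Pi.single i 1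
  · obtain ⟨i, rfl⟩ := hs
    simp [stepQ, h0, hinj.eq_iff]
  · push Not at hs
    simp [stepQ, h0, hs]

lemma ft_stepQ {d : ℕ} (hd : d ≠ 0) (β : Fin d → ZMod 2) :
    ft d (stepQ d) β = 1 - (wt d β : ℝ) / d := by
  have hsum : ∑ i, signChar (β i) = d - 2 * (wt d β : ℝ) := by
    simp only [signChar_eq_one_sub, sum_sub_distrib, ← mul_sum, wt, natCast_card_filter,
      sum_const, card_univ, Fintype.card_fin, nsmul_eq_mul, mul_one]
  rw [ft_eq_sum_signChar, stepQ_eq]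
  simp only [add_mul, sum_add_distrib, ite_mul, zero_mul, sum_mul, sum_ite_eq', mem_univ, if_true]
  rw [sum_comm]
  simp only [sum_ite_eq', mem_univ, if_true, single_dotProduct, one_mul, zero_dotProduct,
    AddChar.map_zero_eq_one, ← mul_sum, hsum]
  field_simp
  ring

lemma sum_eq_natCast_wt {d : ℕ} (β : Fin d → ZMod 2) : ∑ i, β i = (wt d β : ZMod 2) := by
  have h : ∀ b : ZMod 2, b = if b ≠ 0 then 1 else 0 := by decide
  rw [wt, natCast_card_filter]
  exact sum_congr rfl fun i _ => h (β i)

lemma wt_le {d : ℕ} (β : Fin d → ZMod 2) : wt d β ≤ d :=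
  (card_filter_le _ _).trans_eq (card_fin d)

lemma wt_pos {d : ℕ} {β : Fin d → ZMod 2} {i : Fin d} (h : β i ≠ 0) : 0 < wt d β :=
  card_pos.mpr ⟨i, mem_filter.mpr ⟨mem_univ i, h⟩⟩

lemma prod_card_erase {ι M : Type*} [DecidableEq ι] [CommMonoid M] (s t : Finset ι) (g : ℕ → M) :
    ∏ m ∈ s, g #(t.erase m) = g (#t - 1) ^ #(s ∩ t) * g #t ^ (#s - #(s ∩ t)) := by
  rw [← prod_inter_mul_prod_sdiff s t, ← card_sdiff_add_card_inter s t, Nat.add_sub_cancel,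
    ← prod_const, ← prod_const]
  congr 1
  · exact prod_congr rfl fun m hm => by rw [card_erase_of_mem (mem_inter.mp hm).2]
  · exact prod_congr rfl fun m hm => by rw [erase_eq_of_notMem (mem_sdiff.mp hm).2]

/-- Here `t = |T|` and `e = |T \ {0}|` for the support `T` of the proof sketch, in terms of
`w = |β|` and `b = β₀`. -/
lemma prod_two_factors_eq_cases {d w t e : ℕ} {b : ZMod 2} (hwd : w ≤ d) (hb : b ≠ 0 → 1 ≤ w)
    (ht : t = if Even w then w else w + 1) (he : e = if b = 0 then t else t - 1) :
    (1 - ((t - 1 : ℕ) : ℝ) / d) ^ e * (1 - (t : ℝ) / d) ^ (d - e) =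
      if Even w ∧ b = 0 then
        (1 - (w : ℝ) / d) ^ (d - w) * (1 - ((w : ℝ) - 1) / d) ^ w
      else if Odd w ∧ b = 0 then
        (1 - (w : ℝ) / d) ^ (w + 1) * (1 - ((w : ℝ) + 1) / d) ^ (d - w - 1)
      else if Even w ∧ b = 1 then
        (1 - (w : ℝ) / d) ^ (d - w + 1) * (1 - ((w : ℝ) - 1) / d) ^ (w - 1)
      else
        (1 - (w : ℝ) / d) ^ w * (1 - ((w : ℝ) + 1) / d) ^ (d - w) := by
  obtain rfl | rfl := (by decide : ∀ b : ZMod 2, b = 0 ∨ b = 1) b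
  all_goals rcases Nat.even_or_odd w with hw | hw
  · rcases Nat.eq_zero_or_pos w with rfl | hw0
    · simp_all
    · simp_all [Nat.cast_sub hw0, mul_comm]
  · simp_all [← Nat.not_even_iff_odd, Nat.sub_sub]
  · simp_all
    rw [show d - (w - 1) = d - w + 1 by omega, mul_comm]
  · simp_all [← Nat.not_even_iff_odd]

def IsSquaringMatrix (p : ℕ) {d : ℕ} (A : Matrix (Fin d) (Fin d) (ZMod 2)) : Prop :=
  ∀ k : Fin d, (AdjoinRoot.root (cyclotomic p (ZMod 2)) ^ (k : ℕ)) ^ 2 =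
    ∑ i : Fin d, A i k • AdjoinRoot.root (cyclotomic p (ZMod 2)) ^ (i : ℕ)

section rootForm

variable {p : ℕ}

local notation "ζ" => AdjoinRoot.root (cyclotomic p (ZMod 2))

lemma root_pow_eq_one : ζ ^ p = 1 := by
  have h : AdjoinRoot.mk (cyclotomic p (ZMod 2)) (X ^ p - 1) = 0 :=
    AdjoinRoot.mk_eq_zero.mpr (cyclotomic.dvd_X_pow_sub_one p _)
  simpa [sub_eq_zero] using h

lemma root_pow_val_natCast (n : ℕ) : ζ ^ (n : ZMod p).val = ζ ^ n := by
  rw [ZMod.val_natCast, ← pow_eq_pow_mod n root_pow_eq_one]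

variable [Fact p.Prime] {d : ℕ}

lemma sum_root_pow_eq_zero : ∑ i ∈ range p, ζ ^ i = 0 := by
  have h : aeval ζ (∑ i ∈ range p, (X : (ZMod 2)[X]) ^ i) = 0 := by
    rw [AdjoinRoot.aeval_eq, ← cyclotomic_prime, AdjoinRoot.mk_self]
  simpa using h

lemma natCast_eq_neg_one (hd : d = p - 1) : ((d : ℕ) : ZMod p) = -1 := by
  have hp : d + 1 = p := by have := (Fact.out : p.Prime).pos; omega
  have h : ((d + 1 : ℕ) : ZMod p) = 0 := by rw [hp, ZMod.natCast_self]
  rw [eq_neg_iff_add_eq_zero]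
  exact_mod_cast h

variable (hd : d = p - 1)

noncomputable def rootBasis : Module.Basis (Fin d) (ZMod 2) (AdjoinRoot (cyclotomic p (ZMod 2))) :=
  (AdjoinRoot.powerBasis' (cyclotomic.monic p (ZMod 2))).basis.reindex <| finCongr <| by
    rw [AdjoinRoot.powerBasis'_dim, natDegree_cyclotomic, Nat.totient_prime Fact.out, hd]

lemma rootBasis_apply (i : Fin d) : rootBasis hd i = ζ ^ (i : ℕ) := by
  simp [rootBasis]

lemma rootBasis_repr_root_pow : ⇑((rootBasis hd).repr (ζ ^ d)) = 1 := by
  have hp : d + 1 = p := by have := (Fact.out : p.Prime).pos; omega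
  have h : ∑ i ∈ range (d + 1), ζ ^ i = 0 := by
    rw [hp]; exact sum_root_pow_eq_zero
  rw [sum_range_succ, ← Fin.sum_univ_eq_sum_range, add_eq_zero_iff_eq_neg'] at h
  ext i
  simp [h, ← rootBasis_apply hd]

lemma toMatrix_frobeniusAlgHom {A : Matrix (Fin d) (Fin d) (ZMod 2)} (hA : IsSquaringMatrix p A) :
    LinearMap.toMatrix (rootBasis hd) (rootBasis hd)
      (FiniteField.frobeniusAlgHom (ZMod 2) (AdjoinRoot (cyclotomic p (ZMod 2)))).toLinearMap =
        A := by
  ext i k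
  rw [LinearMap.toMatrix_apply]
  simp only [AlgHom.toLinearMap_apply, FiniteField.coe_frobeniusAlgHom, ZMod.card,
    rootBasis_apply, hA k]
  simp only [← rootBasis_apply hd, Module.Basis.repr_sum_self]

/-- The function `s` of the proof sketch. -/
noncomputable def rootForm (β : Fin d → ZMod 2) (m : ZMod p) : ZMod 2 :=
  (rootBasis hd).repr (ζ ^ m.val) ⬝ᵥ β

lemma rootForm_natCast (β : Fin d → ZMod 2) (k : Fin d) : rootForm hd β (k : ℕ) = β k := by
  rw [rootForm, root_pow_val_natCast, ← rootBasis_apply hd, Module.Basis.repr_self,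
    Finsupp.single_eq_pi_single, single_dotProduct, one_mul]

lemma rootForm_neg_one (β : Fin d → ZMod 2) : rootForm hd β (-1) = ∑ i, β i := by
  rw [← natCast_eq_neg_one hd, rootForm, root_pow_val_natCast, rootBasis_repr_root_pow,
    one_dotProduct]

lemma rootForm_transpose_mulVec {A : Matrix (Fin d) (Fin d) (ZMod 2)} (hA : IsSquaringMatrix p A)
    (β : Fin d → ZMod 2) (m : ZMod p) : rootForm hd (Aᵀ *ᵥ β) m = rootForm hd β (2 * m) := by
  rw [rootForm, dotProduct_mulVec, vecMul_transpose, ← toMatrix_frobeniusAlgHom hd hA,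
    LinearMap.toMatrix_mulVec_repr, rootForm]
  congr 3
  simp only [AlgHom.toLinearMap_apply, FiniteField.coe_frobeniusAlgHom, ZMod.card]
  rw [← pow_mul, ← root_pow_val_natCast (m.val * 2)]
  congr 2
  push_cast [ZMod.natCast_val, ZMod.cast_id]
  ring

lemma rootForm_transpose_pow_mulVec {A : Matrix (Fin d) (Fin d) (ZMod 2)}
    (hA : IsSquaringMatrix p A) (j : ℕ) (β : Fin d → ZMod 2) (m : ZMod p) :
    rootForm hd ((Aᵀ ^ j) *ᵥ β) m = rootForm hd β (2 ^ j * m) := by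
  induction j generalizing β with
  | zero => simp
  | succ j ih =>
    rw [pow_succ, ← mulVec_mulVec, ih, rootForm_transpose_mulVec hd hA, pow_succ', mul_assoc]

end rootForm

lemma bijOn_two_pow {p : ℕ} [hp : Fact p.Prime] {d : ℕ} (hd : d = p - 1)
    (hirr : Irreducible (cyclotomic p (ZMod 2))) :
    Set.BijOn (fun j => (2 : ZMod p) ^ j) (range d) (univ.erase 0 : Finset (ZMod p)) := by
  obtain rfl | hp2 := eq_or_ne p 2
  · subst hd
    have h : (Set.univ \ {0} : Set (ZMod 2)) = {1} := by
      ext x; simp only [Set.mem_sdiff, Set.mem_univ, true_and, Set.mem_singleton_iff]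
      decide +revert
    simp [h]
  have hcop : Nat.Coprime 2 p := (Nat.coprime_primes Nat.prime_two hp.out).mpr hp2.symm
  have hord := natDegree_of_dvd_cyclotomic_of_irreducible (K := ZMod 2) (f := 1)
    (by simp) hcop dvd_rfl hirr
  set u := ZMod.unitOfCoprime (2 ^ 1) (hcop.pow_left 1)
  have hu : ∀ j, (2 : ZMod p) ^ j = ((u ^ j : (ZMod p)ˣ) : ZMod p) := by simp [u]
  rw [natDegree_cyclotomic, Nat.totient_prime hp.out, ← hd] at hord
  have hmaps :
      Set.MapsTo (fun j => (2 : ZMod p) ^ j) (range d) (univ.erase 0 : Finset (ZMod p)) :=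
    fun j _ => by simp [hu]
  have hinj : Set.InjOn (fun j => (2 : ZMod p) ^ j) (range d) := by
    intro i hi j hj h
    refine pow_injOn_Iio_orderOf (x := u) ?_ ?_ (Units.ext ?_) <;> simp_all
  refine ⟨hmaps, hinj, surjOn_of_injOn_of_card_le _ hmaps hinj ?_⟩
  simp [hd]

section support

variable {p : ℕ} [Fact p.Prime] {d : ℕ} (hd : d = p - 1)

noncomputable def rootSupport (β : Fin d → ZMod 2) : Finset (ZMod p) :=
  univ.filter fun m => rootForm hd β m ≠ 0

lemma wt_eq_card_erase_neg_one (β : Fin d → ZMod 2) :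
    wt d β = #((rootSupport hd β).erase (-1)) := by
  have hdp : d < p := by have := (Fact.out : p.Prime).pos; omega
  have hval : ∀ k : Fin d, ((k : ℕ) : ZMod p).val = k := fun k => ZMod.val_cast_of_lt (by omega)
  refine card_bij (fun k _ => ((k : ℕ) : ZMod p)) ?_ ?_ ?_
  · intro k hk
    simp only [mem_filter, mem_univ, true_and] at hk
    simp only [rootSupport, mem_erase, mem_filter, mem_univ, true_and, rootForm_natCast,
      ← natCast_eq_neg_one hd]
    refine ⟨fun h => ?_, hk⟩
    have := congrArg ZMod.val h
    rw [hval, ZMod.val_cast_of_lt hdp] at this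
    omega
  · intro a _ b _ h
    exact Fin.ext (by simpa [hval] using congrArg ZMod.val h)
  · intro m hm
    simp only [rootSupport, mem_erase, mem_filter, mem_univ, true_and] at hm
    have hlt : m.val < d := by
      refine lt_of_le_of_ne (by have := ZMod.val_lt m; omega) fun h => hm.1 ?_
      rw [← natCast_eq_neg_one hd, ← h, ZMod.natCast_zmod_val]
    refine ⟨⟨m.val, hlt⟩, ?_, ZMod.natCast_zmod_val m⟩
    simpa [← rootForm_natCast hd β, ZMod.natCast_zmod_val] using hm.2

lemma wt_transpose_pow_mulVec {A : Matrix (Fin d) (Fin d) (ZMod 2)} (hA : IsSquaringMatrix p A)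
    {j : ℕ} (hj : (2 : ZMod p) ^ j ≠ 0) (β : Fin d → ZMod 2) :
    wt d ((Aᵀ ^ j) *ᵥ β) = #((rootSupport hd β).erase (-2 ^ j)) := by
  rw [wt_eq_card_erase_neg_one hd]
  refine card_equiv (Equiv.mulLeft₀ _ hj) fun m => ?_
  simp only [rootSupport, mem_erase, mem_filter, mem_univ, true_and, Equiv.mulLeft₀_apply,
    rootForm_transpose_pow_mulVec hd hA, ← mul_neg_one ((2 : ZMod p) ^ j), ne_eq,
    mul_right_inj' hj]

lemma card_rootSupport (β : Fin d → ZMod 2) :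
    #(rootSupport hd β) = if Even (wt d β) then wt d β else wt d β + 1 := by
  have hmem : -1 ∈ rootSupport hd β ↔ ¬Even (wt d β) := by
    simp [rootSupport, rootForm_neg_one, sum_eq_natCast_wt, ZMod.natCast_eq_zero_iff_even]
  split_ifs with h
  · rw [wt_eq_card_erase_neg_one hd, erase_eq_of_notMem (hmem.not.mpr (not_not.mpr h))]
  · rw [wt_eq_card_erase_neg_one hd, card_erase_add_one (hmem.mpr h)]

lemma card_erase_zero_inter_rootSupport (hd0 : 0 < d) (β : Fin d → ZMod 2) :
    #(univ.erase 0 ∩ rootSupport hd β) =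
      if β ⟨0, hd0⟩ = 0 then #(rootSupport hd β) else #(rootSupport hd β) - 1 := by
  have hmem : 0 ∈ rootSupport hd β ↔ β ⟨0, hd0⟩ ≠ 0 := by
    have h0 := rootForm_natCast hd β ⟨0, hd0⟩
    simp only [Nat.cast_zero] at h0
    simp [rootSupport, h0]
  rw [erase_inter, univ_inter]
  split_ifs with h
  · rw [erase_eq_of_notMem (hmem.not.mpr (not_not.mpr h))]
  · rw [card_erase_of_mem (hmem.mpr h)]

lemma prod_wt_transpose_pow_mulVec {M : Type*} [CommMonoid M]
    (hirr : Irreducible (cyclotomic p (ZMod 2))) {A : Matrix (Fin d) (Fin d) (ZMod 2)}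
    (hA : IsSquaringMatrix p A) (g : ℕ → M) (β : Fin d → ZMod 2) :
    ∏ j ∈ range d, g (wt d ((Aᵀ ^ j) *ᵥ β)) =
      ∏ m ∈ univ.erase 0, g #((rootSupport hd β).erase m) := by
  have hbij := bijOn_two_pow hd hirr
  calc _ = ∏ m ∈ univ.erase 0, g #((rootSupport hd β).erase (-m)) :=
        prod_nbij (2 ^ ·) hbij.mapsTo hbij.injOn hbij.surjOn fun j hj => by
          rw [wt_transpose_pow_mulVec hd hA (mem_erase.mp (hbij.mapsTo hj)).1]
    _ = _ := prod_equiv (Equiv.neg _) (by simp) (by simp)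

end support

theorem ft_square_and_add_after_d_steps (p : ℕ) (hp : p.Prime)
    (f : (ZMod 2)[X]) (hf : f = ∑ i ∈ Finset.range p, X ^ i)
    (hirr : Irreducible f) (d : ℕ) (hd : d = p - 1) (hd0 : 0 < d)
    (A : Matrix (Fin d) (Fin d) (ZMod 2))
    -- `A` is the matrix of squaring in the basis `1, x, ..., x^(d-1)`:
    (hA : ∀ k : Fin d,
      ((AdjoinRoot.root f) ^ (k : ℕ)) ^ 2 =
        ∑ i : Fin d, A i k • (AdjoinRoot.root f) ^ (i : ℕ))
    (β : Fin d → ZMod 2) :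
    ft d (chainDist d A (stepQ d) d) β =
      if Even (wt d β) ∧ β ⟨0, hd0⟩ = 0 then
        (1 - (wt d β : ℝ) / d) ^ (d - wt d β) *
          (1 - ((wt d β : ℝ) - 1) / d) ^ (wt d β)
      else if Odd (wt d β) ∧ β ⟨0, hd0⟩ = 0 then
        (1 - (wt d β : ℝ) / d) ^ (wt d β + 1) *
          (1 - ((wt d β : ℝ) + 1) / d) ^ (d - wt d β - 1)
      else if Even (wt d β) ∧ β ⟨0, hd0⟩ = 1 then
        (1 - (wt d β : ℝ) / d) ^ (d - wt d β + 1) *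
          (1 - ((wt d β : ℝ) - 1) / d) ^ (wt d β - 1)
      else
        (1 - (wt d β : ℝ) / d) ^ (wt d β) *
          (1 - ((wt d β : ℝ) + 1) / d) ^ (d - wt d β) := by
  have := Fact.mk hp
  obtain rfl : f = cyclotomic p (ZMod 2) := hf.trans (cyclotomic_prime _ p).symm
  have hcard : #(univ.erase (0 : ZMod p)) = d := by simp [hd]
  rw [ft_chainDist, prod_congr rfl fun j _ => ft_stepQ hd0.ne' _,
    prod_wt_transpose_pow_mulVec hd hirr hA (fun w => 1 - (w : ℝ) / d),
    prod_card_erase _ _ (fun w => 1 - (w : ℝ) / d), hcard]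
  exact prod_two_factors_eq_cases (wt_le β) wt_pos (card_rootSupport hd β)
    (card_erase_zero_inter_rootSupport hd hd0 β)
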